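/- Let X₁, X₂, X₃ be an ℝ-basis of su(2) with structure constants c^k_{ij}. Then the structure matrix C is non-degenerate, i.e. det C ≠ 0. -/
import Mathlib

open Matrix BigOperators

/-- For an ℝ-basis `X₁, X₂, X₃` of `su(2)` with structure constants
`c^k_{ij}` (defined by `[Xᵢ, Xⱼ] = ∑ₖ c^k_{ij} Xₖ`), the structure matrix
`C = [[c¹₂₃, c¹₃₁, c¹₁₂], [c²₂₃, c²₃₁, c²₁₂], [c³₂₃, c³₃₁, c³₁₂]]`
is non-degenerate: `det C ≠ 0`. Indices are shifted down by one. -/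
theorem structure_matrix_nondegenerate
    (X : Fin 3 → Matrix (Fin 2) (Fin 2) ℂ)
    (hmem : ∀ i, (X i)ᴴ = -X i ∧ (X i).trace = 0)
    (hind : LinearIndependent ℝ X)
    (hspan : ∀ A : Matrix (Fin 2) (Fin 2) ℂ, Aᴴ = -A → A.trace = 0 →
      A ∈ Submodule.span ℝ (Set.range X))
    (c : Fin 3 → Fin 3 → Fin 3 → ℝ)
    (hc : ∀ i j, X i * X j - X j * X i = ∑ k, c k i j • X k) :
    (!![c 0 1 2, c 0 2 0, c 0 0 1;
        c 1 1 2, c 1 2 0, c 1 0 1;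
        c 2 1 2, c 2 2 0, c 2 0 1]).det ≠ 0 := by
  have hLI := Fintype.linearIndependent_iff.mp hind
  -- antisymmetry of the structure constants
  have hanti : ∀ k i j, c k j i = - c k i j := by
    intro k i j
    have hsum : ∑ k, (c k i j + c k j i) • X k = 0 := by
      simp only [add_smul, Finset.sum_add_distrib, ← hc]
      abel
    have := hLI _ hsum k
    linarith
  have hzero : ∀ k i, c k i i = 0 := by
    intro k i
    have := hanti k i i
    linarith
  -- standard basis of su(2)
  set u0 : Matrix (Fin 2) (Fin 2) ℂ := !![Complex.I, 0; 0, -Complex.I] with hu0def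
  set u1 : Matrix (Fin 2) (Fin 2) ℂ := !![0, 1; -1, 0] with hu1def
  set u2 : Matrix (Fin 2) (Fin 2) ℂ := !![0, Complex.I; Complex.I, 0] with hu2def
  have hmem0 : u0ᴴ = -u0 ∧ u0.trace = 0 := by
    constructor
    · ext i j; fin_cases i <;> fin_cases j <;>
        simp [hu0def, Matrix.conjTranspose_apply]
    · simp [hu0def, Matrix.trace_fin_two]
  have hmem1 : u1ᴴ = -u1 ∧ u1.trace = 0 := by
    constructor
    · ext i j; fin_cases i <;> fin_cases j <;>
        simp [hu1def, Matrix.conjTranspose_apply]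
    · simp [hu1def, Matrix.trace_fin_two]
  have hmem2 : u2ᴴ = -u2 ∧ u2.trace = 0 := by
    constructor
    · ext i j; fin_cases i <;> fin_cases j <;>
        simp [hu2def, Matrix.conjTranspose_apply]
    · simp [hu2def, Matrix.trace_fin_two]
  obtain ⟨q0, hq0⟩ := (Submodule.mem_span_range_iff_exists_fun ℝ).mp (hspan u0 hmem0.1 hmem0.2)
  obtain ⟨q1, hq1⟩ := (Submodule.mem_span_range_iff_exists_fun ℝ).mp (hspan u1 hmem1.1 hmem1.2)
  obtain ⟨q2, hq2⟩ := (Submodule.mem_span_range_iff_exists_fun ℝ).mp (hspan u2 hmem2.1 hmem2.2)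
  -- brackets of the standard basis
  have hb12 : u1 * u2 - u2 * u1 = (2:ℝ) • u0 := by
    ext i j; fin_cases i <;> fin_cases j <;>
      simp [hu0def, hu1def, hu2def, Matrix.mul_apply, Fin.sum_univ_two] <;> ring
  have hb20 : u2 * u0 - u0 * u2 = (2:ℝ) • u1 := by
    ext i j; fin_cases i <;> fin_cases j <;>
      simp [hu0def, hu1def, hu2def, Matrix.mul_apply, Fin.sum_univ_two, Complex.ext_iff] <;> ring
  have hb01 : u0 * u1 - u1 * u0 = (2:ℝ) • u2 := by
    ext i j; fin_cases i <;> fin_cases j <;>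
      simp [hu0def, hu1def, hu2def, Matrix.mul_apply, Fin.sum_univ_two, Complex.ext_iff] <;> ring
  -- bilinearity expansion
  have swap3 : ∀ (f : Fin 3 → Fin 3 → Fin 3 → Matrix (Fin 2) (Fin 2) ℂ),
      ∑ i, ∑ j, ∑ k, f i j k = ∑ k, ∑ i, ∑ j, f i j k := by
    intro f
    calc ∑ i, ∑ j, ∑ k, f i j k = ∑ i, ∑ k, ∑ j, f i j k :=
          Finset.sum_congr rfl fun i _ => Finset.sum_comm
      _ = ∑ k, ∑ i, ∑ j, f i j k := Finset.sum_comm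
  have key : ∀ (qa qb : Fin 3 → ℝ),
      (∑ i, qa i • X i) * (∑ j, qb j • X j) - (∑ j, qb j • X j) * (∑ i, qa i • X i)
      = ∑ k, (∑ i, ∑ j, qa i * qb j * c k i j) • X k := by
    intro qa qb
    calc (∑ i, qa i • X i) * (∑ j, qb j • X j) - (∑ j, qb j • X j) * (∑ i, qa i • X i)
        = ∑ i, ∑ j, (qa i * qb j) • (X i * X j - X j * X i) := by
          rw [Finset.sum_mul_sum, Finset.sum_mul_sum,
            Finset.sum_comm (s := (Finset.univ : Finset (Fin 3)))
              (t := (Finset.univ : Finset (Fin 3)))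
              (f := fun j i => (qb j • X j) * (qa i • X i)),
            ← Finset.sum_sub_distrib]
          refine Finset.sum_congr rfl fun i _ => ?_
          rw [← Finset.sum_sub_distrib]
          refine Finset.sum_congr rfl fun j _ => ?_
          rw [smul_mul_assoc, smul_mul_assoc, mul_smul_comm, mul_smul_comm,
            smul_smul, smul_smul, mul_comm (qb j) (qa i), ← smul_sub]
      _ = ∑ i, ∑ j, ∑ k, (qa i * qb j * c k i j) • X k := by
          refine Finset.sum_congr rfl fun i _ => Finset.sum_congr rfl fun j _ => ?_
          rw [hc, Finset.smul_sum]
          exact Finset.sum_congr rfl fun k _ => (smul_smul _ _ _)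
      _ = ∑ k, (∑ i, ∑ j, qa i * qb j * c k i j) • X k := by
          rw [swap3]
          simp only [Finset.sum_smul]
  -- scalar structure equations
  have heq : ∀ (qa qb qd : Fin 3 → ℝ),
      (∑ i, qa i • X i) * (∑ j, qb j • X j) - (∑ j, qb j • X j) * (∑ i, qa i • X i)
        = (2:ℝ) • (∑ i, qd i • X i) →
      ∀ k, ∑ i, ∑ j, qa i * qb j * c k i j = 2 * qd k := by
    intro qa qb qd h k
    rw [key] at h
    rw [Finset.smul_sum] at h
    have h0 : ∑ k, ((∑ i, ∑ j, qa i * qb j * c k i j) - 2 * qd k) • X k = 0 := by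
      simp only [sub_smul, Finset.sum_sub_distrib, h, smul_smul]
      abel
    have := hLI _ h0 k
    linarith
  have eq1 := heq q1 q2 q0 (by rw [hq1, hq2, hq0]; exact hb12)
  have eq2 := heq q2 q0 q1 (by rw [hq2, hq0, hq1]; exact hb20)
  have eq3 := heq q0 q1 q2 (by rw [hq0, hq1, hq2]; exact hb01)
  have cross : ∀ (qa qb qd : Fin 3 → ℝ),
      (∀ k, ∑ i, ∑ j, qa i * qb j * c k i j = 2 * qd k) →
      ∀ k, (qa 1 * qb 2 - qa 2 * qb 1) * c k 1 2 + (qa 2 * qb 0 - qa 0 * qb 2) * c k 2 0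
        + (qa 0 * qb 1 - qa 1 * qb 0) * c k 0 1 = 2 * qd k := by
    intro qa qb qd he k
    have h := he k
    simp only [Fin.sum_univ_three] at h
    linear_combination h - (qa 0 * qb 0) * hzero k 0 - (qa 1 * qb 1) * hzero k 1
      - (qa 2 * qb 2) * hzero k 2 - (qa 0 * qb 2) * hanti k 2 0
      - (qa 1 * qb 0) * hanti k 0 1 - (qa 2 * qb 1) * hanti k 1 2
  have eq1' := cross q1 q2 q0 eq1
  have eq2' := cross q2 q0 q1 eq2
  have eq3' := cross q0 q1 q2 eq3
  -- the coordinate matrix Q is invertible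
  set Q : Matrix (Fin 3) (Fin 3) ℝ := Matrix.of ![q0, q1, q2] with hQdef
  have hQ0 : ∀ i, Q 0 i = q0 i := fun i => rfl
  have hQ1 : ∀ i, Q 1 i = q1 i := fun i => rfl
  have hQ2 : ∀ i, Q 2 i = q2 i := fun i => rfl
  have hQdet : Q.det ≠ 0 := by
    intro h
    obtain ⟨v, hv, hvQ⟩ := Matrix.exists_vecMul_eq_zero_iff.mpr h
    have hcoef : ∀ i, v 0 * q0 i + v 1 * q1 i + v 2 * q2 i = 0 := by
      intro i
      have := congrFun hvQ i
      simpa [Matrix.vecMul, dotProduct, Fin.sum_univ_three, hQdef] using this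
    have hcomb : v 0 • u0 + v 1 • u1 + v 2 • u2 = 0 := by
      rw [← hq0, ← hq1, ← hq2]
      simp only [Finset.smul_sum, smul_smul, ← Finset.sum_add_distrib, ← add_smul]
      refine Finset.sum_eq_zero fun i _ => ?_
      rw [hcoef i, zero_smul]
    have h00 := congrFun (congrFun hcomb 0) 0
    have h01 := congrFun (congrFun hcomb 0) 1
    simp [hu0def, hu1def, hu2def, Complex.ext_iff] at h00 h01
    apply hv
    funext a
    fin_cases a
    · simpa using h00
    · simpa using h01.1
    · simpa using h01.2
  -- the cofactor matrix R
  set R : Matrix (Fin 3) (Fin 3) ℝ := Matrix.of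
    ![![q1 1 * q2 2 - q1 2 * q2 1, q1 2 * q2 0 - q1 0 * q2 2, q1 0 * q2 1 - q1 1 * q2 0],
      ![q2 1 * q0 2 - q2 2 * q0 1, q2 2 * q0 0 - q2 0 * q0 2, q2 0 * q0 1 - q2 1 * q0 0],
      ![q0 1 * q1 2 - q0 2 * q1 1, q0 2 * q1 0 - q0 0 * q1 2, q0 0 * q1 1 - q0 1 * q1 0]]
    with hRdef
  set Ct : Matrix (Fin 3) (Fin 3) ℝ := Matrix.of
    ![![c 0 1 2, c 1 1 2, c 2 1 2],
      ![c 0 2 0, c 1 2 0, c 2 2 0],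
      ![c 0 0 1, c 1 0 1, c 2 0 1]] with hCtdef
  have hRC : R * Ct = (2:ℝ) • Q := by
    ext a k
    fin_cases a <;> fin_cases k <;>
      simp [hRdef, hCtdef, hQdef, Matrix.mul_apply, Fin.sum_univ_three]
    · linear_combination eq1' 0
    · linear_combination eq1' 1
    · linear_combination eq1' 2
    · linear_combination eq2' 0
    · linear_combination eq2' 1
    · linear_combination eq2' 2
    · linear_combination eq3' 0
    · linear_combination eq3' 1
    · linear_combination eq3' 2
  intro hdet0
  have hCt0 : Ct.det = 0 := by
    have : Ct.det = (!![c 0 1 2, c 0 2 0, c 0 0 1;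
        c 1 1 2, c 1 2 0, c 1 0 1;
        c 2 1 2, c 2 2 0, c 2 0 1]).det := by
      simp [hCtdef, Matrix.det_fin_three]
      ring
    rw [this, hdet0]
  have hd := congrArg Matrix.det hRC
  rw [Matrix.det_mul, Matrix.det_smul, hCt0, mul_zero] at hd
  apply hQdet
  have h8 : (2:ℝ) ^ Fintype.card (Fin 3) = 8 := by norm_num
  rw [h8] at hd
  linarith
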